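/- Let L denote the Lie algebra over ℚ of finitely supported strictly lower triangular ℤ×ℤ matrices, let U(L) be its universal enveloping algebra, and let ι : L → U(L) be the canonical map. Then for all integers i > j and all n ≥ 1, the divided power ι(E_{i,j})ⁿ/n! lies in the ℤ-subalgebra of U(L) generated by the divided powers ι(E_{k+1,k})^m/m! for k ∈ ℤ and m ≥ 1. -/

import Mathlib

attribute [local instance 100] LieRing.ofAssociativeRing

/-- The matrix unit `E_{a,b}`, as the endomorphism of `ℤ →₀ ℚ` sending `v` to
`v(b) • e_a`. -/
noncomputable def Eop (a b : ℤ) : Module.End ℚ (ℤ →₀ ℚ) :=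
  (Finsupp.lsingle a).comp (Finsupp.lapply b)

/-- The Lie algebra `L` over `ℚ` of finitely supported strictly lower triangular
`ℤ×ℤ` matrices, realized as the Lie subalgebra of endomorphisms of `ℤ →₀ ℚ`
generated by the matrix units `E_{a,b}` with `a > b` (it is their linear span). -/
noncomputable def lowerL : LieSubalgebra ℚ (Module.End ℚ (ℤ →₀ ℚ)) :=
  LieSubalgebra.lieSpan ℚ (Module.End ℚ (ℤ →₀ ℚ))
    {x : Module.End ℚ (ℤ →₀ ℚ) | ∃ a b : ℤ, b < a ∧ x = Eop a b}

/-- The element `E_{a,b}` (`a > b`) of `L`. -/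
noncomputable def eElt (a b : ℤ) (h : b < a) : lowerL :=
  ⟨Eop a b, LieSubalgebra.subset_lieSpan ⟨a, b, h, rfl⟩⟩

/-!
If `⁅X, Y⁆ = Z` with `Z` commuting with `X` and `Y`, then `ad X` sends `Y ^ n` to `n ! • Z ^ n`;
expanding `(ad X) ^ n = (L_X - R_X) ^ n` binomially and dividing by `n ! ^ 2` gives, for the
divided powers `x^(n) = xⁿ / n!`, the identity `Z^(n) = ∑_{a+b=n} (-1)^b X^(a) Y^(n) X^(b)`.
For `X = E_{i+1,i}`, `Y = E_{i,j}`, `Z = E_{i+1,j}` this writes `E_{i+1,j}^(n)` with integer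
coefficients in divided powers of `E_{i+1,i}` and of `E_{i,j}`, so induction on `i` concludes.
-/

open Finset UniversalEnvelopingAlgebra

section Ring

variable {R : Type*} [Ring R] {X Y Z : R}

theorem lie_pow_of_lie_eq (hXY : ⁅X, Y⁆ = Z) (hYZ : Commute Y Z) (m : ℕ) :
    ⁅X, Y ^ m⁆ = m • (Z * Y ^ (m - 1)) := by
  induction m with
  | zero => simp [Ring.lie_def]
  | succ m ih =>
    have leibniz : ⁅X, Y ^ m * Y⁆ = ⁅X, Y ^ m⁆ * Y + Y ^ m * ⁅X, Y⁆ := by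
      simp only [Ring.lie_def]; noncomm_ring
    rw [pow_succ, leibniz, ih, hXY, (hYZ.pow_left m).eq, smul_mul_assoc, mul_assoc,
      ← pow_succ, succ_nsmul]
    rcases m with _ | m
    · simp
    · rfl

theorem ad_pow_apply_pow_of_lie_eq (hXY : ⁅X, Y⁆ = Z) (hXZ : Commute X Z) (hYZ : Commute Y Z)
    (n m : ℕ) :
    (LieAlgebra.ad ℤ R X ^ n) (Y ^ m) = m.descFactorial n • (Z ^ n * Y ^ (m - n)) := by
  induction n with
  | zero => simp
  | succ n ih =>
    have lie_mul : ⁅X, Z ^ n * Y ^ (m - n)⁆ = Z ^ n * ⁅X, Y ^ (m - n)⁆ := by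
      simp only [Ring.lie_def, ← mul_assoc, (hXZ.pow_right n).eq]; noncomm_ring
    rw [pow_succ', Module.End.mul_apply, ih, map_nsmul, LieAlgebra.ad_apply, lie_mul,
      lie_pow_of_lie_eq hXY hYZ, mul_smul_comm, smul_smul, Nat.descFactorial_succ,
      mul_comm (m - n), ← mul_assoc, ← pow_succ, Nat.sub_sub]

theorem factorial_smul_pow_eq_sum_of_lie_eq (hXY : ⁅X, Y⁆ = Z) (hXZ : Commute X Z)
    (hYZ : Commute Y Z) (n : ℕ) :
    n.factorial • Z ^ n = ∑ p ∈ antidiagonal n,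
      ((-1) ^ p.2 * n.choose p.1 : ℤ) • (X ^ p.1 * Y ^ n * X ^ p.2) := by
  have hD := ad_pow_apply_pow_of_lie_eq hXY hXZ hYZ n n
  rw [Nat.descFactorial_self, Nat.sub_self, pow_zero, mul_one] at hD
  rw [← hD, congrFun (LieAlgebra.ad_eq_lmul_left_sub_lmul_right R) X, Pi.sub_apply,
    sub_eq_add_neg, ((LinearMap.commute_mulLeft_right (R := ℤ) X X).neg_right).add_pow',
    LinearMap.sum_apply]
  refine sum_congr rfl fun p _ => ?_
  rw [neg_pow, LinearMap.pow_mulLeft, LinearMap.pow_mulRight]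
  rcases Nat.even_or_odd p.2 with h | h <;> simp [h.neg_one_pow, mul_assoc]

end Ring

section DividedPower

variable {A : Type*} [Ring A] [Algebra ℚ A]

noncomputable def dividedPower (x : A) (n : ℕ) : A :=
  (n.factorial : ℚ)⁻¹ • x ^ n

lemma dividedPower_zero (x : A) : dividedPower x 0 = 1 := by
  simp [dividedPower]

theorem dividedPower_eq_sum_of_lie_eq {X Y Z : A} (hXY : ⁅X, Y⁆ = Z) (hXZ : Commute X Z)
    (hYZ : Commute Y Z) (n : ℕ) :
    dividedPower Z n = ∑ p ∈ antidiagonal n,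
      (-1 : ℤ) ^ p.2 • (dividedPower X p.1 * dividedPower Y n * dividedPower X p.2) := by
  have hn : (n.factorial : ℚ) ≠ 0 := by positivity
  calc dividedPower Z n = ((n.factorial : ℚ)⁻¹ ^ 2) • (n.factorial • Z ^ n) := by
        rw [dividedPower, ← Nat.cast_smul_eq_nsmul ℚ, smul_smul]
        field_simp
    _ = _ := by
      rw [factorial_smul_pow_eq_sum_of_lie_eq hXY hXZ hYZ, smul_sum]
      refine sum_congr rfl ?_
      rintro ⟨a, b⟩ hab
      rw [HasAntidiagonal.mem_antidiagonal] at hab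
      subst hab
      simp only [dividedPower, smul_mul_assoc, mul_smul_comm, smul_smul,
        ← Int.cast_smul_eq_zsmul ℚ]
      congr 1
      push_cast
      rw [Nat.cast_add_choose]
      field_simp

end DividedPower

theorem UniversalEnvelopingAlgebra.commute_ι_of_lie_eq_zero {R L : Type*} [CommRing R]
    [LieRing L] [LieAlgebra R L] {x y : L} (h : ⁅x, y⁆ = 0) : Commute (ι R x) (ι R y) := by
  rw [commute_iff_lie_eq, ← LieHom.map_lie, h, map_zero]

lemma Eop_mul (a b c d : ℤ) : Eop a b * Eop c d = if b = c then Eop a d else 0 := by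
  refine LinearMap.ext fun v => ?_
  by_cases h : b = c
  · subst h; simp [Eop]
  · simp [Eop, h]

lemma lie_eElt_eElt {a b c : ℤ} (hab : b < a) (hbc : c < b) :
    ⁅eElt a b hab, eElt b c hbc⁆ = eElt a c (hbc.trans hab) := by
  ext : 1
  simp [eElt, Ring.lie_def, Eop_mul, (hbc.trans hab).ne]

lemma lie_eElt_eElt_eq_zero {a b c d : ℤ} (hab : b < a) (hcd : d < c) (hbc : b ≠ c)
    (hda : d ≠ a) : ⁅eElt a b hab, eElt c d hcd⁆ = 0 := by
  ext : 1
  simp [eElt, Ring.lie_def, Eop_mul, hbc, hda]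

noncomputable def integralForm : Subalgebra ℤ (UniversalEnvelopingAlgebra ℚ lowerL) :=
  Algebra.adjoin ℤ {y | ∃ (k : ℤ) (m : ℕ), 1 ≤ m ∧
    y = dividedPower (ι ℚ (eElt (k + 1) k (lt_add_one k))) m}

lemma dividedPower_ι_eElt_succ_mem_integralForm (k : ℤ) (m : ℕ) :
    dividedPower (ι ℚ (eElt (k + 1) k (lt_add_one k))) m ∈ integralForm := by
  rcases m.eq_zero_or_pos with rfl | hm
  · rw [dividedPower_zero]
    exact integralForm.one_mem
  · exact Algebra.subset_adjoin ⟨k, m, hm, rfl⟩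

theorem dividedPower_ι_eElt_mem_integralForm {i j : ℤ} (h : j < i) (n : ℕ) :
    dividedPower (ι ℚ (eElt i j h)) n ∈ integralForm := by
  induction i, h using Int.leInduction generalizing n with
  | base => exact dividedPower_ι_eElt_succ_mem_integralForm j n
  | succ i hji ih =>
    have hXY : ⁅ι ℚ (eElt (i + 1) i (lt_add_one i)), ι ℚ (eElt i j hji)⁆ =
        ι ℚ (eElt (i + 1) j (by omega)) := by
      rw [← LieHom.map_lie]
      exact congrArg _ (lie_eElt_eElt _ _)
    rw [dividedPower_eq_sum_of_lie_eq hXY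
      (commute_ι_of_lie_eq_zero (lie_eElt_eElt_eq_zero _ _ (by omega) (by omega)))
      (commute_ι_of_lie_eq_zero (lie_eElt_eElt_eq_zero _ _ (by omega) (by omega))) n]
    exact sum_mem fun p _ => zsmul_mem (mul_mem (mul_mem
      (dividedPower_ι_eElt_succ_mem_integralForm i p.1) (ih n))
      (dividedPower_ι_eElt_succ_mem_integralForm i p.2)) _

theorem divided_power_mem_integral_form_general (i j : ℤ) (h : j < i) (n : ℕ) :
    (((Nat.factorial n : ℚ))⁻¹ •
        (UniversalEnvelopingAlgebra.ι ℚ (eElt i j h)) ^ n) ∈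
      Algebra.adjoin ℤ
        {y : UniversalEnvelopingAlgebra ℚ lowerL |
          ∃ (k : ℤ) (m : ℕ), 1 ≤ m ∧
            y = ((Nat.factorial m : ℚ))⁻¹ •
              (UniversalEnvelopingAlgebra.ι ℚ (eElt (k + 1) k (lt_add_one k))) ^ m} :=
  dividedPower_ι_eElt_mem_integralForm h n

/-- In the universal enveloping algebra `U(L)` of the Lie algebra `L` of finitely
supported strictly lower triangular `ℤ×ℤ` matrices over `ℚ`, every divided power
`ι(E_{i,j})ⁿ/n!` (`i > j`, `n ≥ 1`) lies in the `ℤ`-subalgebra generated by the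
divided powers `ι(E_{k+1,k})^m/m!` (`k ∈ ℤ`, `m ≥ 1`). -/
theorem divided_power_mem_integral_form (i j : ℤ) (h : j < i) (n : ℕ) (hn : 1 ≤ n) :
    (((Nat.factorial n : ℚ))⁻¹ •
        (UniversalEnvelopingAlgebra.ι ℚ (eElt i j h)) ^ n) ∈
      Algebra.adjoin ℤ
        {y : UniversalEnvelopingAlgebra ℚ lowerL |
          ∃ (k : ℤ) (m : ℕ), 1 ≤ m ∧
            y = ((Nat.factorial m : ℚ))⁻¹ •
              (UniversalEnvelopingAlgebra.ι ℚ (eElt (k + 1) k (lt_add_one k))) ^ m} :=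
  divided_power_mem_integral_form_general i j h n
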